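/- For all integers n ≥ 1 and δ ≥ 2, every sequential schedule of the tree T(n, δ) has peak memory at least n + δ. -/

import Mathlib

/-- A finite rooted in-tree: every node has a parent (the root is its own
parent), and a rank function witnesses that following parents strictly
decreases towards the root, so every node has a unique path to the root. -/
structure InTree where
  V : Type
  [fin : Fintype V]
  [deq : DecidableEq V]
  root : V
  parent : V → V
  parent_root : parent root = root
  rk : V → ℕ
  rk_lt : ∀ v, v ≠ root → rk (parent v) < rk v
  rk_root : ∀ v, rk v = 0 → v = root

attribute [instance] InTree.fin InTree.deq

/-- A schedule of `T` on `p` processors: at most `p` tasks per unit time step,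
and every non-root task finishes before its parent starts. -/
def InTree.IsSchedule (T : InTree) (p : ℕ) (t : T.V → ℕ) : Prop :=
  (∀ s : ℕ, (Finset.univ.filter (fun i => t i = s)).card ≤ p) ∧
  (∀ i : T.V, i ≠ T.root → t i + 1 ≤ t (T.parent i))

/-- Makespan of a schedule: `max_i (t i + 1)`. -/
def InTree.makespan (T : InTree) (t : T.V → ℕ) : ℕ :=
  Finset.univ.sup (fun i => t i + 1)

/-- Memory used at step `s`: number of nodes `i` with `t i ≤ s` that are the
root or whose parent has not finished before step `s`. -/
def InTree.memAt (T : InTree) (t : T.V → ℕ) (s : ℕ) : ℕ :=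
  (Finset.univ.filter (fun i : T.V => t i ≤ s ∧ (i = T.root ∨ s ≤ t (T.parent i)))).card

/-- Peak memory of a schedule: maximum memory usage over steps `0 ≤ s < makespan`. -/
def InTree.peakMemory (T : InTree) (t : T.V → ℕ) : ℕ :=
  (Finset.range (T.makespan t)).sup (T.memAt t)


/-- Node set of the tree `T(n, δ)` used in the inapproximability proof:
a root; for each `i < n` a chain `cp^i_1, …, cp^i_{δ-1}` (index `j : Fin (δ-1)`
represents `cp^i_{j+1}`); for each `cp^i_j` a child `d^i_j`; for each `d^i_j`
its `δ - (j+1) + 1 = δ - j` leaf children; and two extra nodes `b^i_δ`,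
`b^i_{δ+1}` below `cp^i_{δ-1}`. -/
abbrev TV (n δ : ℕ) : Type :=
  Unit ⊕ (Fin n × Fin (δ-1)) ⊕ (Fin n × Fin (δ-1)) ⊕
    (Σ q : Fin n × Fin (δ-1), Fin (δ - q.2.val)) ⊕ (Fin n) ⊕ (Fin n)

/-- The tree `T(n, δ)` of the inapproximability proof. -/
def theTree (n δ : ℕ) (hδ : 2 ≤ δ) : InTree where
  V := TV n δ
  root := Sum.inl ()
  parent := fun v => match v with
    | Sum.inl _ => Sum.inl ()
    | Sum.inr (Sum.inl (i, j)) =>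
        if h : j.val = 0 then Sum.inl ()
        else Sum.inr (Sum.inl (i, ⟨j.val - 1, by have := j.isLt; omega⟩))
    | Sum.inr (Sum.inr (Sum.inl (i, j))) => Sum.inr (Sum.inl (i, j))
    | Sum.inr (Sum.inr (Sum.inr (Sum.inl ⟨q, _⟩))) => Sum.inr (Sum.inr (Sum.inl q))
    | Sum.inr (Sum.inr (Sum.inr (Sum.inr (Sum.inl i)))) =>
        Sum.inr (Sum.inl (i, ⟨δ - 2, by omega⟩))
    | Sum.inr (Sum.inr (Sum.inr (Sum.inr (Sum.inr i)))) =>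
        Sum.inr (Sum.inr (Sum.inr (Sum.inr (Sum.inl i))))
  parent_root := rfl
  rk := fun v => match v with
    | Sum.inl _ => 0
    | Sum.inr (Sum.inl (_, j)) => j.val + 1
    | Sum.inr (Sum.inr (Sum.inl (_, j))) => j.val + 2
    | Sum.inr (Sum.inr (Sum.inr (Sum.inl ⟨q, _⟩))) => q.2.val + 3
    | Sum.inr (Sum.inr (Sum.inr (Sum.inr (Sum.inl _)))) => δ
    | Sum.inr (Sum.inr (Sum.inr (Sum.inr (Sum.inr _)))) => δ + 1
  rk_lt := by
    rintro (u | ⟨i, j⟩ | ⟨i, j⟩ | ⟨q, k⟩ | i | i) h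
    · cases u; exact absurd rfl h
    · by_cases h0 : j.val = 0 <;> simp [h0] <;> omega
    · simp
    · simp
    · simp; omega
    · simp
  rk_root := by
    rintro (u | ⟨i, j⟩ | ⟨i, j⟩ | ⟨q, k⟩ | i | i) h
    · cases u; rfl
    · simp at h
    · simp at h
    · simp at h
    · simp at h; omega
    · simp at h

/-- The node `cp^i_{j+1}` of `T(n, δ)`. -/
def cpNode (n δ : ℕ) (hδ : 2 ≤ δ) (i : Fin n) (j : Fin (δ-1)) : (theTree n δ hδ).V :=
  Sum.inr (Sum.inl (i, j))

/-! Let `i₀` be the branch whose `d^i_1` is computed last, at step `s`. At `s` the `δ` leaf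
children of `d^{i₀}_1` are in memory. For every branch `i`, `d^i_1` is finished by `s` while its
grandparent, the root, has not started; so the output of `d^i_1` or that of its parent `cp^i_1` is
in memory at `s`. These are `n + δ` distinct nodes. -/

open Finset

namespace InTree

def InMemory (T : InTree) (t : T.V → ℕ) (s : ℕ) (i : T.V) : Prop :=
  t i ≤ s ∧ (i = T.root ∨ s ≤ t (T.parent i))

variable {T : InTree}

theorem card_le_memAt {t : T.V → ℕ} {s : ℕ} {S : Finset T.V}
    (hS : ∀ i ∈ S, T.InMemory t s i) : #S ≤ T.memAt t s :=
  card_le_card fun i hi => mem_filter.mpr ⟨mem_univ i, hS i hi⟩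

theorem lt_makespan (t : T.V → ℕ) (i : T.V) : t i < T.makespan t :=
  Nat.lt_of_succ_le (le_sup (f := fun i => t i + 1) (mem_univ i))

theorem memAt_le_peakMemory {t : T.V → ℕ} {s : ℕ} (hs : s < T.makespan t) :
    T.memAt t s ≤ T.peakMemory t :=
  le_sup (mem_range.mpr hs)

theorem IsSchedule.lt_parent {p : ℕ} {t : T.V → ℕ} (ht : T.IsSchedule p t) {i : T.V}
    (hi : i ≠ T.root) : t i < t (T.parent i) :=
  ht.2 i hi

theorem IsSchedule.inMemory_at_parent {p : ℕ} {t : T.V → ℕ} (ht : T.IsSchedule p t) {i : T.V}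
    (hi : i ≠ T.root) : T.InMemory t (t (T.parent i)) i :=
  ⟨(ht.lt_parent hi).le, Or.inr le_rfl⟩

theorem inMemory_or_inMemory_parent {t : T.V → ℕ} {s : ℕ} {i : T.V} (hi : t i ≤ s)
    (hs : s < t (T.parent (T.parent i))) :
    T.InMemory t s i ∨ T.InMemory t s (T.parent i) := by
  by_cases h : s ≤ t (T.parent i)
  · exact .inl ⟨hi, .inr h⟩
  · exact .inr ⟨(not_le.mp h).le, .inr hs.le⟩

end InTree

namespace theTree

def firstLevel {δ : ℕ} (hδ : 2 ≤ δ) : Fin (δ - 1) := ⟨0, by omega⟩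

/-- The node `d^i_1`. -/
def dNode (n δ : ℕ) (hδ : 2 ≤ δ) (i : Fin n) : (theTree n δ hδ).V :=
  Sum.inr (Sum.inr (Sum.inl (i, firstLevel hδ)))

/-- The `δ` leaf children of `d^i_1`. -/
def dLeaf (n δ : ℕ) (hδ : 2 ≤ δ) (i : Fin n) (k : Fin δ) : (theTree n δ hδ).V :=
  Sum.inr (Sum.inr (Sum.inr (Sum.inl ⟨(i, firstLevel hδ), k⟩)))

variable {n δ : ℕ} {hδ : 2 ≤ δ}

theorem dNode_ne_root (i : Fin n) : dNode n δ hδ i ≠ (theTree n δ hδ).root := Sum.inr_ne_inl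

theorem cpNode_ne_root (i : Fin n) (j : Fin (δ - 1)) :
    cpNode n δ hδ i j ≠ (theTree n δ hδ).root := Sum.inr_ne_inl

theorem dLeaf_ne_root (i : Fin n) (k : Fin δ) : dLeaf n δ hδ i k ≠ (theTree n δ hδ).root :=
  Sum.inr_ne_inl

theorem dNode_injective : Function.Injective (dNode n δ hδ) := fun _ _ h => by cases h; rfl

theorem cpNode_firstLevel_injective :
    Function.Injective (cpNode n δ hδ · (firstLevel hδ)) := fun _ _ h => by cases h; rfl

theorem dLeaf_injective (i : Fin n) : Function.Injective (dLeaf n δ hδ i) :=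
  fun _ _ h => by cases h; rfl

theorem dNode_ne_cpNode (i i' : Fin n) (j : Fin (δ - 1)) :
    dNode n δ hδ i ≠ cpNode n δ hδ i' j := nofun

theorem dNode_ne_dLeaf (i i' : Fin n) (k : Fin δ) :
    dNode n δ hδ i ≠ dLeaf n δ hδ i' k := nofun

theorem cpNode_ne_dLeaf (i i' : Fin n) (j : Fin (δ - 1)) (k : Fin δ) :
    cpNode n δ hδ i j ≠ dLeaf n δ hδ i' k := nofun

theorem add_le_memAt_dNode {p : ℕ} {t : (theTree n δ hδ).V → ℕ}
    (ht : (theTree n δ hδ).IsSchedule p t)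
    {i₀ : Fin n} (hmax : ∀ i, t (dNode n δ hδ i) ≤ t (dNode n δ hδ i₀)) :
    n + δ ≤ (theTree n δ hδ).memAt t (t (dNode n δ hδ i₀)) := by
  have hroot : t (dNode n δ hδ i₀) < t (theTree n δ hδ).root := calc
    _ < t (cpNode n δ hδ i₀ (firstLevel hδ)) := ht.lt_parent (dNode_ne_root i₀)
    _ < t (theTree n δ hδ).root := ht.lt_parent (cpNode_ne_root i₀ _)
  have hbranch : ∀ i, ∃ v, (v = dNode n δ hδ i ∨ v = cpNode n δ hδ i (firstLevel hδ)) ∧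
      (theTree n δ hδ).InMemory t (t (dNode n δ hδ i₀)) v := fun i =>
    (InTree.inMemory_or_inMemory_parent (hmax i) hroot).elim
      (fun h => ⟨_, .inl rfl, h⟩) (fun h => ⟨_, .inr rfl, h⟩)
  choose f hf hf_mem using hbranch
  have hf_inj : Function.Injective f := by
    intro a b hab
    rcases hf a with ha | ha <;> rcases hf b with hb | hb <;> rw [ha, hb] at hab
    · exact dNode_injective hab
    · exact absurd hab (dNode_ne_cpNode _ _ _)
    · exact absurd hab.symm (dNode_ne_cpNode _ _ _)
    · exact cpNode_firstLevel_injective hab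
  have hpick : Function.Injective (Sum.elim f (dLeaf n δ hδ i₀)) := by
    refine hf_inj.sumElim (dLeaf_injective i₀) fun a k => ?_
    rcases hf a with ha | ha <;> rw [ha]
    exacts [dNode_ne_dLeaf _ _ _, cpNode_ne_dLeaf _ _ _ _]
  calc n + δ = #(univ.map ⟨_, hpick⟩) := by simp
    _ ≤ _ := InTree.card_le_memAt <| by
      simp only [mem_map, mem_univ, true_and, Function.Embedding.coeFn_mk]
      rintro _ ⟨a | k, rfl⟩
      · exact hf_mem a
      · exact ht.inMemory_at_parent (dLeaf_ne_root i₀ k)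

end theTree

/-- Every sequential schedule (one processor) of `T(n, δ)` has peak memory at
least `n + δ`. -/
theorem stmt6 (n δ : ℕ) (hn : 1 ≤ n) (hδ : 2 ≤ δ)
    (t : (theTree n δ hδ).V → ℕ) (ht : (theTree n δ hδ).IsSchedule 1 t) :
    n + δ ≤ (theTree n δ hδ).peakMemory t := by
  obtain ⟨i₀, -, hmax⟩ := exists_max_image univ (fun i => t (theTree.dNode n δ hδ i))
    ⟨⟨0, hn⟩, mem_univ _⟩
  exact (theTree.add_le_memAt_dNode ht fun i => hmax i (mem_univ i)).trans
    (InTree.memAt_le_peakMemory (InTree.lt_makespan t _))
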